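/- arXiv:2311.15205 — 6 statements merged into one kernel-verified Lean document; each statement's English description precedes it below -/
import Mathlib

section
/- Let K be a compact Hausdorff space and let G be a set of continuous functions from K to [0,∞]. Then the pointwise supremum of G equals the constant function ∞ on a dense subset of K if and only if for every nonempty open set U ⊆ K and every n ∈ ℝ there exist a nonempty open set V ⊆ U and g ∈ G with g(t) > n for all t ∈ V. -/
open Set

theorem stmt_0 {K : Type*} [TopologicalSpace K] [CompactSpace K] [T2Space K]
    (G : Set (K → ENNReal)) (hG : ∀ g ∈ G, Continuous g) :
    Dense {t : K | (⨆ g ∈ G, g t) = ⊤} ↔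
      ∀ U : Set K, IsOpen U → U.Nonempty → ∀ n : ℝ,
        ∃ V : Set K, IsOpen V ∧ V.Nonempty ∧ V ⊆ U ∧
          ∃ g ∈ G, ∀ t ∈ V, ENNReal.ofReal n < g t := by
  constructor
  · intro hd U hU hUne n
    obtain ⟨t, ht, htU⟩ := hd.exists_mem_open hU hUne
    have ht : (⨆ g ∈ G, g t) = ⊤ := ht
    have hlt : ENNReal.ofReal n < ⨆ g ∈ G, g t := ht ▸ ENNReal.ofReal_lt_top
    obtain ⟨g, hgG, hgt⟩ : ∃ g ∈ G, ENNReal.ofReal n < g t := by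
      simpa [lt_iSup_iff] using hlt
    refine ⟨U ∩ g ⁻¹' Ioi (ENNReal.ofReal n), hU.inter ((isOpen_Ioi).preimage (hG g hgG)),
      ⟨t, htU, hgt⟩, inter_subset_left, g, hgG, fun s hs => hs.2⟩
  · intro h
    have hdense : ∀ m : ℕ, Dense {t : K | ENNReal.ofReal m < ⨆ g ∈ G, g t} := by
      intro m
      rw [dense_iff_inter_open]
      intro U hU hUne
      obtain ⟨V, hV, ⟨v, hv⟩, hVU, g, hgG, hg⟩ := h U hU hUne m
      exact ⟨v, hVU hv, lt_of_lt_of_le (hg v hv)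
        (le_iSup₂_of_le g hgG le_rfl)⟩
    have hopen : ∀ m : ℕ, IsOpen {t : K | ENNReal.ofReal m < ⨆ g ∈ G, g t} := by
      intro m
      have : {t : K | ENNReal.ofReal m < ⨆ g ∈ G, g t}
          = ⋃ g ∈ G, {t : K | ENNReal.ofReal m < g t} := by
        ext t
        simp [lt_iSup_iff]
      rw [this]
      exact isOpen_biUnion fun g hg => (isOpen_Ioi).preimage (hG g hg)
    have hBaire := dense_iInter_of_isOpen hopen hdense
    refine hBaire.mono fun t ht => ?_
    simp only [mem_iInter, mem_setOf_eq] at ht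
    have : ∀ m : ℕ, (m : ENNReal) ≤ ⨆ g ∈ G, g t := by
      intro m
      have := (ht m).le
      rwa [ENNReal.ofReal_natCast] at this
    have htop : (⊤ : ENNReal) ≤ ⨆ g ∈ G, g t := by
      rw [← ENNReal.iSup_natCast]
      exact iSup_le this
    exact top_le_iff.mp htop
end

section
/- Let K be a compact Hausdorff space and (X_n) an increasing sequence of continuous functions K → [0,∞] whose pointwise supremum on a dense set defines X. If X_n ↑ X in the order of continuous extended-real-valued functions (i.e., X is the least continuous upper bound of the X_n), then there exists a comeagre set M ⊆ K such that X_n(t) ↑ X(t) for every t ∈ M. -/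
open Set

theorem stmt_1 {K : Type*} [TopologicalSpace K] [CompactSpace K] [T2Space K]
    [ExtremallyDisconnected K]
    (X : ℕ → K → EReal) (Xl : K → EReal)
    (hc : ∀ n, Continuous (X n)) (hcl : Continuous Xl)
    (hmono : ∀ n t, X n t ≤ X (n + 1) t)
    (hub : ∀ n t, X n t ≤ Xl t)
    (hlub : ∀ Y : K → EReal, Continuous Y → (∀ n t, X n t ≤ Y t) → ∀ t, Xl t ≤ Y t) :
    ∃ M : Set K, IsMeagre Mᶜ ∧ ∀ t ∈ M, (⨆ n, X n t) = Xl t := by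
  classical
  -- for each rational q, the set N q is nowhere dense
  set N : ℚ → Set K := fun q =>
    {t | (∀ n, X n t ≤ ((q : ℝ) : EReal)) ∧ ((q : ℝ) : EReal) < Xl t} with hN
  have hnd : ∀ q : ℚ, IsNowhereDense (N q) := by
    intro q
    rw [IsNowhereDense]
    by_contra h
    obtain ⟨v, hv⟩ := nonempty_iff_ne_empty.mpr h
    set V := interior (closure (N q)) with hV
    have hVopen : IsOpen V := isOpen_interior
    -- closure (N q) ⊆ C := ⋂ n {X n ≤ q}
    have hCclosed : IsClosed {t | ∀ n, X n t ≤ ((q : ℝ) : EReal)} := by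
      have : {t | ∀ n, X n t ≤ ((q : ℝ) : EReal)}
          = ⋂ n, {t | X n t ≤ ((q : ℝ) : EReal)} := by
        ext t; simp
      rw [this]
      exact isClosed_iInter fun n => isClosed_le (hc n) continuous_const
    have hclsub : closure (N q) ⊆ {t | ∀ n, X n t ≤ ((q : ℝ) : EReal)} := by
      apply closure_minimal _ hCclosed
      intro t ht; exact ht.1
    set W := closure V with hW
    have hWopen : IsOpen W := ExtremallyDisconnected.open_closure V hVopen
    have hWclosed : IsClosed W := isClosed_closure
    -- X n ≤ q on W
    have hXW : ∀ n, ∀ t ∈ W, X n t ≤ ((q : ℝ) : EReal) := by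
      intro n
      have : V ⊆ {t | X n t ≤ ((q : ℝ) : EReal)} := fun t ht =>
        (hclsub (interior_subset ht)) n
      intro t ht
      exact closure_minimal this (isClosed_le (hc n) continuous_const) ht
    -- define Y
    set Y : K → EReal := fun t => if t ∈ W then min (Xl t) ((q : ℝ) : EReal) else Xl t
      with hY
    have hYcont : Continuous Y := by
      apply Continuous.if _ (hcl.min continuous_const) hcl
      intro a ha
      have : frontier W = ∅ := by
        rw [frontier, hWclosed.closure_eq, interior_eq_iff_isOpen.mpr hWopen,
          diff_self]
      rw [show {x | x ∈ W} = W from rfl, this] at ha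
      exact absurd ha (notMem_empty a)
    have hYub : ∀ n t, X n t ≤ Y t := by
      intro n t
      rw [hY]
      by_cases htW : t ∈ W
      · simp only [htW, if_true, le_min_iff]
        exact ⟨hub n t, hXW n t htW⟩
      · simp only [htW, if_false]; exact hub n t
    have hXlY := hlub Y hYcont hYub
    -- find a point of N q inside V
    have hvcl : v ∈ closure (N q) := interior_subset hv
    obtain ⟨t, htV, htN⟩ : (V ∩ N q).Nonempty := by
      rcases mem_closure_iff.mp hvcl V hVopen hv with ⟨t, ht⟩
      exact ⟨t, ht⟩
    have htW : t ∈ W := subset_closure htV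
    have := hXlY t
    rw [hY] at this
    simp only [htW, if_true, le_min_iff] at this
    exact absurd this.2 (not_le.mpr htN.2)
  refine ⟨(⋃ q : ℚ, N q)ᶜ, ?_, ?_⟩
  · rw [compl_compl]
    have : (⋃ q : ℚ, N q) = ⋃ n : ℕ, N ((Denumerable.eqv ℚ).symm n) := by
      apply subset_antisymm
      · intro t ht
        rcases mem_iUnion.mp ht with ⟨q, hq⟩
        exact mem_iUnion.mpr ⟨(Denumerable.eqv ℚ) q, by simpa using hq⟩
      · intro t ht
        rcases mem_iUnion.mp ht with ⟨n, hn⟩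
        exact mem_iUnion.mpr ⟨_, hn⟩
    rw [this]
    refine isMeagre_iUnion fun n => ?_
    set q := (Denumerable.eqv ℚ).symm n
    rw [isMeagre_iff_countable_union_isNowhereDense]
    exact ⟨{closure (N q)}, by simpa using (hnd q).closure, countable_singleton _,
      by simpa using subset_closure⟩
  · intro t ht
    have hle : (⨆ n, X n t) ≤ Xl t := iSup_le fun n => hub n t
    rcases eq_or_lt_of_le hle with h | h
    · exact h
    · exfalso
      obtain ⟨x, hx1, hx2⟩ := EReal.exists_rat_btwn_of_lt h
      apply ht
      exact mem_iUnion.mpr ⟨x, fun n => le_of_lt (lt_of_le_of_lt (le_iSup (fun n => X n t) n) hx1), hx2⟩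
end

section
/- Let K be an extremally disconnected compact Hausdorff space and let X : K → ℝ̄ be continuous and finite on a dense open set U. For any continuous f : ℝ → ℝ, the composition f ∘ X, defined and continuous on {X finite}, extends uniquely to a continuous function K → ℝ̄ that is finite on a dense set. -/
open Set

theorem stmt_4 {K : Type*} [TopologicalSpace K] [CompactSpace K] [T2Space K]
    [ExtremallyDisconnected K]
    (X : K → EReal) (hX : Continuous X)
    (hdense : Dense {ω : K | X ω ≠ ⊤ ∧ X ω ≠ ⊥})
    (f : ℝ → ℝ) (hf : Continuous f) :
    ∃! F : K → EReal, Continuous F ∧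
      (∀ ω : K, X ω ≠ ⊤ → X ω ≠ ⊥ → F ω = ((f (X ω).toReal : ℝ) : EReal)) ∧
      Dense {ω : K | F ω ≠ ⊤ ∧ F ω ≠ ⊥} := by
  classical
  set U : Set K := {ω : K | X ω ≠ ⊤ ∧ X ω ≠ ⊥} with hU
  have hUopen : IsOpen U := by
    have : U = X ⁻¹' ({⊥, ⊤}ᶜ : Set EReal) := by
      ext ω
      simp only [hU, mem_setOf_eq, mem_preimage, mem_compl_iff, mem_insert_iff,
        mem_singleton_iff, not_or]
      tauto
    rw [this]
    have hcl : IsClosed ({⊥, ⊤} : Set EReal) := (Set.toFinite _).isClosed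
    exact hcl.isOpen_compl.preimage hX
  set g : K → EReal := fun ω => ((f (X ω).toReal : ℝ) : EReal) with hg
  have hgc : ContinuousOn g U := by
    have h1 : ContinuousOn (fun ω => (X ω).toReal) U := by
      apply EReal.continuousOn_toReal.comp hX.continuousOn
      intro ω hω
      simp only [mem_compl_iff, mem_insert_iff, mem_singleton_iff, not_or]
      exact ⟨hω.2, hω.1⟩
    exact continuous_coe_real_ereal.comp_continuousOn (hf.comp_continuousOn h1)
  -- the closure of the graph of `g` over `U`
  set Γ : Set (K × EReal) := closure {p : K × EReal | p.1 ∈ U ∧ p.2 = g p.1} with hΓ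
  have hΓc : IsClosed Γ := isClosed_closure
  have hfiber : ∀ p : K × EReal, p ∈ Γ → p.1 ∈ U → p.2 = g p.1 := by
    intro p hp hpU
    by_contra hne
    obtain ⟨V, W, hV, hW, hyV, hgW, hVW⟩ := t2_separation hne
    obtain ⟨N, hNopen, hpN, hNsub⟩ :
        ∃ N : Set K, IsOpen N ∧ p.1 ∈ N ∧ ∀ ω ∈ N ∩ U, g ω ∈ W := by
      have h2 : W ∈ Filter.map g (nhdsWithin p.1 U) := (hgc p.1 hpU) (hW.mem_nhds hgW)
      rw [Filter.mem_map] at h2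
      rw [mem_nhdsWithin] at h2
      obtain ⟨N, hNopen, hpN, hsub⟩ := h2
      exact ⟨N, hNopen, hpN, fun ω hω => hsub ⟨hω.1, hω.2⟩⟩
    have hopen : IsOpen ((N ∩ U) ×ˢ V) := ((hNopen.inter hUopen).prod hV)
    have hmem : p ∈ (N ∩ U) ×ˢ V := ⟨⟨hpN, hpU⟩, hyV⟩
    obtain ⟨q, hq1, hq2⟩ := mem_closure_iff.mp hp _ hopen hmem
    have h3 : g q.1 ∈ V := hq2.2 ▸ hq1.2
    have h4 : g q.1 ∈ V ∩ W := ⟨h3, hNsub q.1 hq1.1⟩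
    rw [Set.disjoint_iff_inter_eq_empty.mp hVW] at h4
    exact h4
  have hcompΓ : IsCompact Γ := hΓc.isCompact
  haveI : CompactSpace Γ := isCompact_iff_compactSpace.mp hcompΓ
  have hsurj : Function.Surjective (fun q : Γ => (q : K × EReal).1) := by
    intro ω
    have hclosed : IsClosed (Prod.fst '' Γ) := (hcompΓ.image continuous_fst).isClosed
    have hsub : U ⊆ Prod.fst '' Γ := fun ω hω =>
      ⟨(ω, g ω), subset_closure ⟨hω, rfl⟩, rfl⟩
    have hdns : Dense (Prod.fst '' Γ) := hdense.mono hsub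
    have : Prod.fst '' Γ = univ := by
      rw [← hclosed.closure_eq, hdns.closure_eq]
    have hωmem : ω ∈ Prod.fst '' Γ := this ▸ mem_univ ω
    obtain ⟨q, hq, hq2⟩ := hωmem
    exact ⟨⟨q, hq⟩, hq2⟩
  -- use projectivity of K to get a continuous section
  obtain ⟨h, hhc, hhs⟩ := CompactT2.ExtremallyDisconnected.projective (A := K)
    (f := id) (g := fun q : Γ => (q : K × EReal).1) continuous_id
    (continuous_fst.comp continuous_subtype_val) hsurj
  set F : K → EReal := fun ω => ((h ω : K × EReal).2) with hF
  have hFc : Continuous F := continuous_snd.comp (continuous_subtype_val.comp hhc)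
  have hFagree : ∀ ω ∈ U, F ω = g ω := by
    intro ω hω
    have h1 : ((h ω : K × EReal)).1 = ω := congrFun hhs ω
    have h2 := hfiber (h ω) (h ω).2 (by rw [h1]; exact hω)
    rw [hF]
    simp only
    rw [h2, h1]
  have hFfin : Dense {ω : K | F ω ≠ ⊤ ∧ F ω ≠ ⊥} := by
    apply hdense.mono
    intro ω hω
    have := hFagree ω hω
    simp only [mem_setOf_eq, this, hg]
    exact ⟨EReal.coe_ne_top _, EReal.coe_ne_bot _⟩
  refine ⟨F, ⟨hFc, fun ω h1 h2 => hFagree ω ⟨h1, h2⟩, hFfin⟩, ?_⟩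
  rintro G ⟨hGc, hGagree, -⟩
  exact hGc.ext_on hdense hFc fun ω hω => (hGagree ω hω.1 hω.2).trans (hFagree ω hω).symm
end

section
/- Let E be an order complete vector lattice with weak unit, F a conditional expectation operator on E (an order continuous strictly positive positive linear projection with order complete range containing the weak unit), f : ℝ^n → ℝ a continuous convex function, and X = (X_1,…,X_n) ∈ E^n such that f(X) ∈ E (functional calculus). Then F(f(X)) ≥ f(F X_1, …, F X_n). -/
/-!
Every continuous affine minorant `l + c` of `f` gives `F (f ∘ X) ≥ F (l ∘ X + c) = l ∘ F X + c`,
because `F` is positive, linear and unital. A lower semicontinuous convex function is the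
supremum of its continuous affine minorants (Hahn–Banach), so these bounds add up to
`F (f ∘ X) ≥ f ∘ F X`.
-/

open Set

theorem LinearMap.map_linearMap_comp_pi {ι K K' : Type*} [Fintype ι]
    (F : (K → ℝ) →ₗ[ℝ] (K' → ℝ)) (l : (ι → ℝ) →ₗ[ℝ] ℝ) (X : ι → K → ℝ) :
    F (fun ω => l fun i => X i ω) = fun ω => l fun i => F (X i) ω := by
  classical
  have hl : (fun ω => l fun i => X i ω) = ∑ i, l (fun j => if i = j then 1 else 0) • X i := by
    ext ω
    simp [l.pi_apply_eq_sum_univ (fun i => X i ω), Finset.sum_apply, mul_comm]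
  ext ω
  simp [hl, l.pi_apply_eq_sum_univ (fun i => F (X i) ω), Finset.sum_apply, mul_comm]

theorem LinearMap.map_affine_comp_pi {ι K K' : Type*} [Fintype ι]
    (F : (K → ℝ) →ₗ[ℝ] (K' → ℝ)) (hunit : F 1 = 1) (l : (ι → ℝ) →ₗ[ℝ] ℝ) (c : ℝ)
    (X : ι → K → ℝ) :
    F (fun ω => l (fun i => X i ω) + c) = fun ω => l (fun i => F (X i) ω) + c := by
  have hsplit : (fun ω => l (fun i => X i ω) + c) = (fun ω => l fun i => X i ω) + c • 1 := by
    ext; simp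
  rw [hsplit, map_add, map_smul, hunit, F.map_linearMap_comp_pi]
  ext; simp

theorem ConvexOn.comp_map_le_map_comp {ι K K' : Type*} [Fintype ι]
    (F : (K → ℝ) →ₗ[ℝ] (K' → ℝ)) (hmono : Monotone F) (hunit : F 1 = 1)
    {f : (ι → ℝ) → ℝ} (hconv : ConvexOn ℝ univ f) (hf : LowerSemicontinuous f)
    (X : ι → K → ℝ) :
    (fun ω => f fun i => F (X i) ω) ≤ F (fun ω => f fun i => X i ω) := by
  intro ω
  refine le_of_forall_lt_imp_le_of_dense fun a ha => ?_
  obtain ⟨l, c, hle, hlc⟩ := hconv.exists_affine_le_of_lt (𝕜 := ℝ) (mem_univ _) ha isClosed_univ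
    (hf.lowerSemicontinuousOn univ)
  have hminorant : (fun ω => l (fun i => X i ω) + c) ≤ fun ω => f fun i => X i ω :=
    fun ω => by simpa using hle ⟨_, mem_univ (fun i => X i ω)⟩
  calc a = l (fun i => F (X i) ω) + c := by simpa using hlc.symm
    _ = F (fun ω => l (fun i => X i ω) + c) ω :=
      (congrFun (F.map_affine_comp_pi hunit l.toLinearMap c X) ω).symm
    _ ≤ F (fun ω => f fun i => X i ω) ω := hmono hminorant ω

theorem stmt_8_general {K : Type*} {n : ℕ}
    (F : (K → ℝ) →ₗ[ℝ] (K → ℝ))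
    (hmono : Monotone F)
    (hunit : F 1 = 1)
    (f : (Fin n → ℝ) → ℝ) (hconv : ConvexOn ℝ Set.univ f) (hcont : Continuous f)
    (X : Fin n → K → ℝ) :
    (fun ω => f (fun i => F (X i) ω)) ≤ F (fun ω => f (fun i => X i ω)) :=
  hconv.comp_map_le_map_comp F hmono hunit hcont.lowerSemicontinuous X

theorem stmt_8 {K : Type*} {n : ℕ}
    (F : (K → ℝ) →ₗ[ℝ] (K → ℝ))
    (hproj : ∀ x, F (F x) = F x)
    (hmono : Monotone F)
    (hstrict : ∀ x : K → ℝ, 0 ≤ x → x ≠ 0 → F x ≠ 0)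
    (hunit : F 1 = 1)
    (hoc : ∀ (g : ℕ → K → ℝ) (h : K → ℝ), Monotone g →
      IsLUB (Set.range g) h → IsLUB (Set.range fun m => F (g m)) (F h))
    (f : (Fin n → ℝ) → ℝ) (hconv : ConvexOn ℝ Set.univ f) (hcont : Continuous f)
    (X : Fin n → K → ℝ) :
    (fun ω => f (fun i => F (X i) ω)) ≤ F (fun ω => f (fun i => X i ω)) :=
  stmt_8_general F hmono hunit f hconv hcont X
end

section
/- Let K be an extremally disconnected compact Hausdorff space and (U_n) a sequence of pairwise disjoint clopen subsets of K. Then the supremum τ = sup_n n·𝟙_{U_n}, taken in the lattice of continuous functions K → [0,∞], satisfies: τ is finite off a nowhere dense set, {τ = n} = U_n for all n ≥ 1 (up to the same identification), and the range of τ is contained in ℕ ∪ {0} ∪ {∞}. -/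
/-!
Put `W n = closure (⋃ k ≥ n, U k)`, which is clopen because `K` is extremally disconnected.
Since `{n ≤ τ}` is closed, `τ ≥ n` on `W n`. Conversely, replacing `τ` by `min τ c` off a clopen
set `C` gives another continuous upper bound as soon as every `n • 𝟙_{U n}` is `≤ c` off `C`, so
minimality gives `τ ≤ c` off `C`; with `C = W (n + 1)`, `c = n`, and with `C = (U n)ᶜ`, `c = n`,
this gives `τ ≤ n` off `W (n + 1)` and `τ = n` on `U n`. Hence `τ` takes values in `ℕ ∪ {∞}`, the
level set `{τ = n}` lies in `W n \ W (n + 1) ⊆ U n`, and `{τ = ∞}` is a closed subset of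
`W 1 = closure (⋃ k ≥ 1, U k)` missing the open set `⋃ k ≥ 1, U k`, hence nowhere dense.
-/

open Set

structure IsContinuousLUB {ι K α : Type*} [TopologicalSpace K] [TopologicalSpace α] [Preorder α]
    (f : ι → K → α) (τ : K → α) : Prop where
  continuous : Continuous τ
  le : ∀ i x, f i x ≤ τ x
  le_of_forall_le : ∀ σ : K → α, Continuous σ → (∀ i x, f i x ≤ σ x) → ∀ x, τ x ≤ σ x

namespace IsContinuousLUB

variable {ι K α : Type*} [TopologicalSpace K]

theorem le_of_notMem_isClopen [LinearOrder α] [TopologicalSpace α] [OrderClosedTopology α]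
    {f : ι → K → α} {τ : K → α} (h : IsContinuousLUB f τ) {C : Set K} (hC : IsClopen C) {c : α}
    (hfc : ∀ i, ∀ x ∉ C, f i x ≤ c) {x : K} (hx : x ∉ C) : τ x ≤ c := by
  classical
  let σ : K → α := C.piecewise τ fun y => min (τ y) c
  have hσ : Continuous σ :=
    h.continuous.piecewise (by simp [hC.frontier_eq]) (h.continuous.min continuous_const)
  have hfσ : ∀ i y, f i y ≤ σ y := by
    intro i y
    by_cases hy : y ∈ C
    · simpa [σ, hy] using h.le i y
    · simpa [σ, hy] using ⟨h.le i y, hfc i y hy⟩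
  simpa [σ, hx] using h.le_of_forall_le σ hσ hfσ x

end IsContinuousLUB

noncomputable def levelIndicator {K : Type*} (U : ℕ → Set K) (n : ℕ) : K → ENNReal :=
  (U n).indicator fun _ => (n : ENNReal)

def tailClosure {K : Type*} [TopologicalSpace K] (U : ℕ → Set K) (n : ℕ) : Set K :=
  closure (⋃ k ≥ n, U k)

section tailClosure

variable {K : Type*} [TopologicalSpace K] {U : ℕ → Set K}

theorem subset_tailClosure {n k : ℕ} (hnk : n ≤ k) : U k ⊆ tailClosure U n :=
  (subset_biUnion_of_mem (u := U) hnk).trans subset_closure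

theorem isClopen_tailClosure [ExtremallyDisconnected K] (hU : ∀ n, IsOpen (U n)) (n : ℕ) :
    IsClopen (tailClosure U n) :=
  ⟨isClosed_closure, ExtremallyDisconnected.open_closure _ (isOpen_biUnion fun k _ => hU k)⟩

theorem tailClosure_subset_union (hU : ∀ n, IsClosed (U n)) (n : ℕ) :
    tailClosure U n ⊆ U n ∪ tailClosure U (n + 1) := by
  have hsplit : ⋃ k ≥ n, U k = U n ∪ ⋃ k ≥ n + 1, U k := by
    ext x
    simp only [mem_iUnion, mem_union, exists_prop]
    constructor
    · rintro ⟨k, hk, hx⟩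
      rcases hk.eq_or_lt with rfl | hlt
      exacts [Or.inl hx, Or.inr ⟨k, hlt, hx⟩]
    · rintro (hx | ⟨k, hk, hx⟩)
      exacts [⟨n, le_rfl, hx⟩, ⟨k, by omega, hx⟩]
  rw [tailClosure, hsplit, closure_union, (hU n).closure_eq]
  rfl

end tailClosure

namespace IsContinuousLUB

variable {K : Type*} [TopologicalSpace K] {U : ℕ → Set K} {τ : K → ENNReal}

theorem natCast_le_of_mem (h : IsContinuousLUB (levelIndicator U) τ)
    {n : ℕ} {x : K} (hx : x ∈ U n) : (n : ENNReal) ≤ τ x := by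
  simpa [levelIndicator, hx] using h.le n x

theorem eq_natCast_of_mem (h : IsContinuousLUB (levelIndicator U) τ)
    (hU : ∀ n, IsClopen (U n)) (hdisj : Pairwise (Function.onFun Disjoint U))
    {n : ℕ} {x : K} (hx : x ∈ U n) : τ x = n := by
  refine le_antisymm (h.le_of_notMem_isClopen (hU n).compl (fun k y hy => ?_) (not_not.2 hx))
    (h.natCast_le_of_mem hx)
  replace hy : y ∈ U n := by simpa using hy
  rcases eq_or_ne k n with rfl | hkn
  · simp [levelIndicator, hy]
  · simp [levelIndicator, disjoint_left.1 (hdisj hkn).symm hy]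

theorem natCast_le_of_mem_tailClosure (h : IsContinuousLUB (levelIndicator U) τ)
    {n : ℕ} {x : K} (hx : x ∈ tailClosure U n) :
    (n : ENNReal) ≤ τ x := by
  refine closure_minimal ?_ (isClosed_le continuous_const h.continuous) hx
  simp only [iUnion_subset_iff]
  exact fun k hk y hy => le_trans (by exact_mod_cast hk) (h.natCast_le_of_mem hy)

variable [ExtremallyDisconnected K]

theorem le_natCast_of_notMem_tailClosure (h : IsContinuousLUB (levelIndicator U) τ)
    (hU : ∀ n, IsOpen (U n)) {n : ℕ} {x : K} (hx : x ∉ tailClosure U (n + 1)) : τ x ≤ n := by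
  refine h.le_of_notMem_isClopen (isClopen_tailClosure hU (n + 1)) (fun k y hy => ?_) hx
  by_cases hyk : y ∈ U k
  · have hkn : k ≤ n := by
      by_contra! hnk
      exact hy (subset_tailClosure hnk hyk)
    simpa [levelIndicator, hyk] using hkn
  · simp [levelIndicator, hyk]

theorem eq_top_or_exists_eq_natCast (h : IsContinuousLUB (levelIndicator U) τ)
    (hU : ∀ n, IsClopen (U n)) (x : K) : τ x = ⊤ ∨ ∃ m : ℕ, τ x = m := by
  classical
  refine or_iff_not_imp_left.2 fun hx => ?_
  have hN : ∃ N : ℕ, τ x < N := ENNReal.exists_nat_gt hx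
  obtain ⟨m, hm⟩ : ∃ m, Nat.find hN = m + 1 :=
    Nat.exists_eq_add_one.2 (Nat.pos_of_ne_zero fun h0 => by simpa [h0] using Nat.find_spec hN)
  have hlt : τ x < (m + 1 : ℕ) := hm ▸ Nat.find_spec hN
  have hle : (m : ENNReal) ≤ τ x := not_lt.1 (Nat.find_min hN (by omega))
  have hxW : x ∉ tailClosure U (m + 1) := fun hxW =>
    (h.natCast_le_of_mem_tailClosure hxW).not_gt hlt
  exact ⟨m, le_antisymm (h.le_natCast_of_notMem_tailClosure (fun n => (hU n).isOpen) hxW) hle⟩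

theorem setOf_eq_natCast (h : IsContinuousLUB (levelIndicator U) τ)
    (hU : ∀ n, IsClopen (U n)) (hdisj : Pairwise (Function.onFun Disjoint U)) {n : ℕ}
    (hn : 1 ≤ n) : {x | τ x = n} = U n := by
  refine Subset.antisymm (fun x hx => ?_) fun x hx => h.eq_natCast_of_mem hU hdisj hx
  obtain ⟨m, rfl⟩ := Nat.exists_eq_add_of_le' hn
  have hmem : x ∈ tailClosure U (m + 1) := by
    by_contra hxW
    have : ((m + 1 : ℕ) : ENNReal) ≤ m :=
      hx ▸ h.le_natCast_of_notMem_tailClosure (fun n => (hU n).isOpen) hxW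
    norm_cast at this
    omega
  have hnot : x ∉ tailClosure U (m + 1 + 1) := by
    intro hxW
    have : ((m + 1 + 1 : ℕ) : ENNReal) ≤ (m + 1 : ℕ) := hx ▸ h.natCast_le_of_mem_tailClosure hxW
    norm_cast at this
    omega
  exact ((tailClosure_subset_union (fun n => (hU n).isClosed) _ hmem).resolve_right hnot)

theorem isNowhereDense_setOf_eq_top (h : IsContinuousLUB (levelIndicator U) τ)
    (hU : ∀ n, IsClopen (U n)) (hdisj : Pairwise (Function.onFun Disjoint U)) :
    IsNowhereDense {x | τ x = ⊤} := by
  have hclosed : IsClosed {x | τ x = ⊤} := isClosed_eq h.continuous continuous_const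
  have hsub : {x | τ x = ⊤} ⊆ tailClosure U 1 := fun x hx => by
    by_contra hxW
    have := h.le_natCast_of_notMem_tailClosure (fun n => (hU n).isOpen) hxW
    rw [show τ x = ⊤ from hx] at this
    exact absurd this (by simp)
  have hdisjV : Disjoint (interior {x | τ x = ⊤}) (⋃ k ≥ 1, U k) := by
    refine disjoint_left.2 fun x hx hxV => ?_
    obtain ⟨k, -, hxk⟩ := mem_iUnion₂.1 hxV
    simpa [h.eq_natCast_of_mem hU hdisj hxk] using interior_subset hx
  rw [hclosed.isNowhereDense_iff]
  exact (hdisjV.closure_right isOpen_interior).eq_bot_of_le (interior_subset.trans hsub)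

end IsContinuousLUB

theorem stmt_9_general {K : Type*} [TopologicalSpace K]
    [ExtremallyDisconnected K]
    (U : ℕ → Set K) (hU : ∀ n, IsClopen (U n))
    (hdisj : Pairwise (Function.onFun Disjoint U))
    (τ : K → ENNReal) (hτ : Continuous τ)
    (hub : ∀ n : ℕ, ∀ ω : K, Set.indicator (U n) (fun _ => (n : ENNReal)) ω ≤ τ ω)
    (hlub : ∀ σ : K → ENNReal, Continuous σ →
      (∀ n : ℕ, ∀ ω : K, Set.indicator (U n) (fun _ => (n : ENNReal)) ω ≤ σ ω) →
      ∀ ω, τ ω ≤ σ ω) :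
    IsNowhereDense {ω : K | τ ω = ⊤} ∧
      (∀ n : ℕ, 1 ≤ n → {ω : K | τ ω = (n : ENNReal)} = U n) ∧
      (∀ ω : K, τ ω = ⊤ ∨ ∃ m : ℕ, τ ω = (m : ENNReal)) := by
  have h : IsContinuousLUB (levelIndicator U) τ := ⟨hτ, hub, hlub⟩
  exact ⟨h.isNowhereDense_setOf_eq_top hU hdisj, fun _ hn => h.setOf_eq_natCast hU hdisj hn,
    h.eq_top_or_exists_eq_natCast hU⟩

theorem stmt_9 {K : Type*} [TopologicalSpace K] [CompactSpace K] [T2Space K]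
    [ExtremallyDisconnected K]
    (U : ℕ → Set K) (hU : ∀ n, IsClopen (U n))
    (hdisj : Pairwise (Function.onFun Disjoint U))
    (τ : K → ENNReal) (hτ : Continuous τ)
    (hub : ∀ n : ℕ, ∀ ω : K, Set.indicator (U n) (fun _ => (n : ENNReal)) ω ≤ τ ω)
    (hlub : ∀ σ : K → ENNReal, Continuous σ →
      (∀ n : ℕ, ∀ ω : K, Set.indicator (U n) (fun _ => (n : ENNReal)) ω ≤ σ ω) →
      ∀ ω, τ ω ≤ σ ω) :
    IsNowhereDense {ω : K | τ ω = ⊤} ∧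
      (∀ n : ℕ, 1 ≤ n → {ω : K | τ ω = (n : ENNReal)} = U n) ∧
      (∀ ω : K, τ ω = ⊤ ∨ ∃ m : ℕ, τ ω = (m : ENNReal)) :=
  stmt_9_general U hU hdisj τ hτ hub hlub
end

section
/- Let K be an extremally disconnected compact Hausdorff space and (τ_n) an increasing sequence of continuous functions K → ℕ ∪ {∞}. Then the supremum τ of (τ_n) in the lattice of continuous extended-real-valued functions on K also has range contained in ℕ ∪ {∞}. -/
open Set

open scoped ENNReal

theorem ENNReal.exists_natCast_lt_lt_natCast_succ {a : ℝ≥0∞} (ha : a ≠ ⊤)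
    (hnat : ∀ m : ℕ, a ≠ m) : ∃ m : ℕ, (m : ℝ≥0∞) < a ∧ a < (m + 1 : ℕ) := by
  lift a to NNReal using ha
  refine ⟨⌊a⌋₊, lt_of_le_of_ne ?_ (hnat _).symm, ?_⟩
  · exact_mod_cast Nat.floor_le a.coe_nonneg
  · exact_mod_cast Nat.lt_floor_add_one a

theorem ENNReal.le_natCast_of_lt_natCast_succ {x : ℝ≥0∞} (hx : x = ⊤ ∨ ∃ k : ℕ, x = k)
    {m : ℕ} (h : x < (m + 1 : ℕ)) : x ≤ m := by
  obtain rfl | ⟨k, rfl⟩ := hx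
  · exact absurd h (by simp)
  · exact_mod_cast Nat.lt_succ_iff.mp (by exact_mod_cast h)

theorem IsClopen.continuous_piecewise {X Y : Type*} [TopologicalSpace X] [TopologicalSpace Y]
    {s : Set X} [∀ x, Decidable (x ∈ s)] (hs : IsClopen s) {f g : X → Y}
    (hf : Continuous f) (hg : Continuous g) : Continuous (s.piecewise f g) :=
  hf.piecewise (fun x hx => by simp [hs.frontier_eq] at hx) hg

section

variable {X α ι : Type*} [TopologicalSpace X] [ExtremallyDisconnected X]
  [LinearOrder α] [TopologicalSpace α] [OrderClosedTopology α]

/-- The closure of the open set `{f < d}` is clopen, so `f` can be replaced by `min f c` on it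
without losing continuity. -/
theorem ExtremallyDisconnected.exists_continuous_upper_bound_le_of_lt {f : X → α}
    (hf : Continuous f) {g : ι → X → α} (hg : ∀ i, Continuous (g i))
    (hgf : ∀ i x, g i x ≤ f x) {c d : α} (hgc : ∀ i x, f x < d → g i x ≤ c) :
    ∃ σ : X → α, Continuous σ ∧ (∀ i x, g i x ≤ σ x) ∧ ∀ x, f x < d → σ x ≤ c := by
  classical
  set U := f ⁻¹' Iio d
  have hU : IsOpen U := isOpen_Iio.preimage hf
  have hV : IsClopen (closure U) := ⟨isClosed_closure, open_closure U hU⟩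
  have hgc' : ∀ i, ∀ x ∈ closure U, g i x ≤ c := fun i =>
    (isClosed_le (hg i) continuous_const).closure_subset_iff.mpr (hgc i)
  refine ⟨(closure U).piecewise (fun x => min (f x) c) f,
    hV.continuous_piecewise (hf.min continuous_const) hf, fun i x => ?_, fun x hx => ?_⟩
  · by_cases hx : x ∈ closure U
    · simpa [hx] using ⟨hgf i x, hgc' i x hx⟩
    · simpa [hx] using hgf i x
  · simp [subset_closure (s := U) hx]

end

theorem stmt_12_general {K : Type*} [TopologicalSpace K]
    [ExtremallyDisconnected K]
    (τs : ℕ → K → ENNReal) (hτc : ∀ n, Continuous (τs n))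
    (hrange : ∀ n ω, τs n ω = ⊤ ∨ ∃ m : ℕ, τs n ω = (m : ENNReal))
    (τ : K → ENNReal) (hτ : Continuous τ)
    (hub : ∀ n ω, τs n ω ≤ τ ω)
    (hlub : ∀ σ : K → ENNReal, Continuous σ → (∀ n ω, τs n ω ≤ σ ω) → ∀ ω, τ ω ≤ σ ω) :
    ∀ ω : K, τ ω = ⊤ ∨ ∃ m : ℕ, τ ω = (m : ENNReal) := by
  intro ω
  by_contra! h
  obtain ⟨m, hmω, hωm⟩ := ENNReal.exists_natCast_lt_lt_natCast_succ h.1 h.2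
  obtain ⟨σ, hσ, hτsσ, hσm⟩ := ExtremallyDisconnected.exists_continuous_upper_bound_le_of_lt
    hτ hτc hub fun n x hx =>
      ENNReal.le_natCast_of_lt_natCast_succ (hrange n x) ((hub n x).trans_lt hx)
  exact ((hlub σ hσ hτsσ ω).trans (hσm ω hωm)).not_gt hmω

theorem stmt_12 {K : Type*} [TopologicalSpace K] [CompactSpace K] [T2Space K]
    [ExtremallyDisconnected K]
    (τs : ℕ → K → ENNReal) (hτc : ∀ n, Continuous (τs n))
    (hrange : ∀ n ω, τs n ω = ⊤ ∨ ∃ m : ℕ, τs n ω = (m : ENNReal))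
    (hmono : ∀ n ω, τs n ω ≤ τs (n + 1) ω)
    (τ : K → ENNReal) (hτ : Continuous τ)
    (hub : ∀ n ω, τs n ω ≤ τ ω)
    (hlub : ∀ σ : K → ENNReal, Continuous σ → (∀ n ω, τs n ω ≤ σ ω) → ∀ ω, τ ω ≤ σ ω) :
    ∀ ω : K, τ ω = ⊤ ∨ ∃ m : ℕ, τ ω = (m : ENNReal) :=
  stmt_12_general τs hτc hrange τ hτ hub hlub
end
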